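/- Let ⇒ be the union of the rewrite relation → and the conjugation-with-flip relation xy ⤳ yx̄. If u ⇒* v and v →* v^R, then the circular word u·ū admits a matching satisfying the crossing condition. -/

import Mathlib

/-- The four-letter alphabet `{a, b, ā, b̄}`; `A` stands for `ā` and `B` for `b̄`. -/
inductive L : Type
  | a | b | A | B
deriving DecidableEq

/-- The antiparallel letter: `a ↔ ā`, `b ↔ b̄`. -/
def bar : L → L
  | .a => .A
  | .A => .a
  | .b => .B
  | .B => .b

/-- Letterwise application of the involution `a ↔ ā`, `b ↔ b̄` to a word. -/
def barw (w : List L) : List L := w.map bar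

/-- The eight rewrite rules of the Sub Rosa system:
`ab→ba`, `bā→āb`, `āb̄→b̄ā`, `b̄a→ab̄`, `aā→ε`, `āa→ε`, `bb̄→ε`, `b̄b→ε`. -/
def Rule : List L → List L → Prop := fun x y =>
  (x = [.a, .b] ∧ y = [.b, .a]) ∨ (x = [.b, .A] ∧ y = [.A, .b]) ∨
  (x = [.A, .B] ∧ y = [.B, .A]) ∨ (x = [.B, .a] ∧ y = [.a, .B]) ∨
  (x = [.a, .A] ∧ y = []) ∨ (x = [.A, .a] ∧ y = []) ∨
  (x = [.b, .B] ∧ y = []) ∨ (x = [.B, .b] ∧ y = [])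

/-- One rewrite step: replace a factor matching the left side of a rule by its right side. -/
def Step (u v : List L) : Prop :=
  ∃ p s x y, Rule x y ∧ u = p ++ x ++ s ∧ v = p ++ y ++ s

/-- `u →* v`: the reflexive transitive closure of the rewrite step. -/
def Steps : List L → List L → Prop := Relation.ReflTransGen Step

/-- `rep w n` is the `n`-fold concatenation `w^n`. -/
def rep (w : List L) (n : ℕ) : List L := (List.replicate n w).flatten

/-- A matching on a word pairs each occurrence of a letter with an occurrence of its
antiparallel letter, bijectively (an involution without fixed points). -/
structure Matching (w : List L) where
  m : Fin w.length → Fin w.length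
  invol : ∀ i, m (m i) = i
  nofix : ∀ i, m i ≠ i
  compat : ∀ i, w.get (m i) = bar (w.get i)

/-- The 4-tuples of letters that are cyclic rotations of `(a, b, ā, b̄)`. -/
def Rot4 : L → L → L → L → Prop := fun x y z t =>
  (x = .a ∧ y = .b ∧ z = .A ∧ t = .B) ∨ (x = .b ∧ y = .A ∧ z = .B ∧ t = .a) ∨
  (x = .A ∧ y = .B ∧ z = .a ∧ t = .b) ∨ (x = .B ∧ y = .a ∧ z = .b ∧ t = .A)

/-- The crossing condition: whenever two matched pairs interleave (cross) in the cyclic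
word, the four letters read in positional order form a cyclic rotation of `a, b, ā, b̄`. -/
def CrossOK {w : List L} (M : Matching w) : Prop :=
  ∀ i j i' j' : Fin w.length, i < j → j < i' → i' < j' →
    M.m i = i' → M.m j = j' →
    Rot4 (w.get i) (w.get j) (w.get i') (w.get j')

/-- A word admits a matching satisfying the crossing condition. -/
def GoodWord (w : List L) : Prop := ∃ M : Matching w, CrossOK M

/-- `u ⇒ v`: either a rewrite step, or the conjugation-with-flip `xy ⤳ y x̄`
(move a prefix to the end with all letters replaced by their antiparallels). -/
def FStep (u v : List L) : Prop :=
  Step u v ∨ ∃ x y, u = x ++ y ∧ v = y ++ barw x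

/-- `u ⇒* v`: the reflexive transitive closure of `⇒`. -/
def FSteps : List L → List L → Prop := Relation.ReflTransGen FStep

set_option linter.constructorNameAsVariable false
set_option linter.unreachableTactic false
set_option linter.unusedTactic false
-- basics
lemma bar_bar (c : L) : bar (bar c) = c := by cases c <;> rfl

lemma barw_barw (w : List L) : barw (barw w) = w := by
  simp [barw, List.map_map, Function.comp_def, bar_bar]

lemma barw_append (u v : List L) : barw (u ++ v) = barw u ++ barw v := List.map_append

lemma length_barw (w : List L) : (barw w).length = w.length := List.length_map _

lemma rot4_rot {x y z t : L} (h : Rot4 x y z t) : Rot4 y z t x := by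
  rcases h with ⟨rfl,rfl,rfl,rfl⟩|⟨rfl,rfl,rfl,rfl⟩|⟨rfl,rfl,rfl,rfl⟩|⟨rfl,rfl,rfl,rfl⟩ <;>
    simp [Rot4]

-- total letter access
def wAt (w : List L) (o : ℕ) : L := w.getD o L.a

lemma wAt_append (P Q : List L) (o : ℕ) :
    wAt (P ++ Q) o = if o < P.length then wAt P o else wAt Q (o - P.length) := by
  unfold wAt
  split_ifs with h
  · rw [List.getD_eq_getElem _ _ (by simp; omega), List.getD_eq_getElem _ _ h,
      List.getElem_append_left h]
  · by_cases h2 : o < P.length + Q.length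
    · rw [List.getD_eq_getElem _ _ (by simp; omega), List.getD_eq_getElem _ _ (by omega),
        List.getElem_append_right (by omega)]
    · rw [List.getD_eq_default _ _ (by simp; omega), List.getD_eq_default _ _ (by omega)]

lemma wAt_cons (a : L) (l : List L) (o : ℕ) :
    wAt (a :: l) o = if o = 0 then a else wAt l (o-1) := by
  cases o <;> simp [wAt]

lemma getElem_wAt {w : List L} {o : ℕ} (h : o < w.length) : w[o] = wAt w o :=
  (List.getD_eq_getElem _ _ h).symm

lemma wAt_barw {w : List L} {o : ℕ} (h : o < w.length) : wAt (barw w) o = bar (wAt w o) := by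
  rw [← getElem_wAt h, ← getElem_wAt (by simp [length_barw]; omega : o < (barw w).length)]
  simp [barw]

lemma wAt_reverse {w : List L} {o : ℕ} (h : o < w.length) :
    wAt w.reverse o = wAt w (w.length - 1 - o) := by
  rw [← getElem_wAt (by simpa using h), ← getElem_wAt (by omega)]
  rw [List.getElem_reverse]

def NatGood (w : List L) (F : ℕ → ℕ) : Prop :=
  (∀ o, o < w.length → F o < w.length) ∧
  (∀ o, o < w.length → F (F o) = o) ∧
  (∀ o, o < w.length → F o ≠ o) ∧
  (∀ o, o < w.length → wAt w (F o) = bar (wAt w o)) ∧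
  (∀ i j i' j', j' < w.length → i < j → j < i' → i' < j' → F i = i' → F j = j' →
     Rot4 (wAt w i) (wAt w j) (wAt w i') (wAt w j'))

lemma goodword_iff (w : List L) : GoodWord w ↔ ∃ F, NatGood w F := by
  constructor
  · rintro ⟨M, hc⟩
    refine ⟨fun o => if h : o < w.length then (M.m ⟨o, h⟩).val else o, ?_, ?_, ?_, ?_, ?_⟩
    · intro o ho; simp only [ho, dif_pos]; exact (M.m ⟨o, ho⟩).isLt
    · intro o ho
      simp only [ho, dif_pos, Fin.is_lt, Fin.eta]
      have := M.invol ⟨o, ho⟩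
      exact congrArg Fin.val this
    · intro o ho
      simp only [ho, dif_pos]
      intro h
      exact M.nofix ⟨o, ho⟩ (Fin.ext h)
    · intro o ho
      simp only [ho, dif_pos]
      have := M.compat ⟨o, ho⟩
      rw [List.get_eq_getElem, List.get_eq_getElem] at this
      rwa [getElem_wAt, getElem_wAt] at this
    · intro i j i' j' hj' h1 h2 h3 e1 e2
      have hi : i < w.length := by omega
      have hj : j < w.length := by omega
      have hi' : i' < w.length := by omega
      simp only [hi, dif_pos] at e1
      simp only [hj, dif_pos] at e2
      have := hc ⟨i, hi⟩ ⟨j, hj⟩ ⟨i', hi'⟩ ⟨j', hj'⟩ h1 h2 h3 (Fin.ext e1) (Fin.ext e2)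
      simp only [List.get_eq_getElem] at this
      rwa [getElem_wAt, getElem_wAt, getElem_wAt, getElem_wAt] at this
  · rintro ⟨F, h1, h2, h3, h4, h5⟩
    refine ⟨⟨fun i => ⟨F i.val, h1 _ i.isLt⟩, fun i => Fin.ext (h2 _ i.isLt),
      fun i hh => h3 _ i.isLt (congrArg Fin.val hh), fun i => ?_⟩, ?_⟩
    · simp only [List.get_eq_getElem]
      rw [getElem_wAt, getElem_wAt]
      exact h4 _ i.isLt
    · intro i j i' j' hij hji' hi'j' e1 e2
      simp only [List.get_eq_getElem]
      rw [getElem_wAt i.isLt, getElem_wAt j.isLt, getElem_wAt i'.isLt, getElem_wAt j'.isLt]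
      exact h5 i.val j.val i'.val j'.val j'.isLt hij hji' hi'j'
        (congrArg Fin.val e1) (congrArg Fin.val e2)

-- letter-location lemmas for words of shape P ++ [c,d] ++ S
lemma wAt_mid_lo (P S : List L) (c d : L) {o : ℕ} (h : o < P.length) :
    wAt (P ++ [c, d] ++ S) o = wAt (P ++ S) o := by
  simp [wAt_append, h]

lemma wAt_mid_k (P S : List L) (c d : L) : wAt (P ++ [c, d] ++ S) P.length = c := by
  simp [wAt_append, wAt_cons]

lemma wAt_mid_k1 (P S : List L) (c d : L) : wAt (P ++ [c, d] ++ S) (P.length + 1) = d := by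
  simp [wAt_append, wAt_cons]

lemma wAt_mid_hi (P S : List L) (c d : L) {o : ℕ} (h : P.length + 2 ≤ o) :
    wAt (P ++ [c, d] ++ S) o = wAt (P ++ S) (o - 2) := by
  have hL : (P ++ [c, d]).length = P.length + 2 := by simp
  simp only [wAt_append, wAt_cons, hL]
  split_ifs <;> try omega
  · congr 1; omega

def ins_un (k o : ℕ) : ℕ := if o < k then o else o - 2
def ins_sh (k o : ℕ) : ℕ := if o < k then o else o + 2
def ins_G (k : ℕ) (F : ℕ → ℕ) (o : ℕ) : ℕ :=
  if o = k then k+1 else if o = k+1 then k else ins_sh k (F (ins_un k o))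

lemma good_insert (P S : List L) (c : L) (h : GoodWord (P ++ S)) :
    GoodWord (P ++ [c, bar c] ++ S) := by
  rw [goodword_iff] at h ⊢
  obtain ⟨F, hlt, hinv, hne, hcompat, hcross⟩ := h
  have hlw : (P ++ S).length = P.length + S.length := by simp
  have hlw' : (P ++ [c, bar c] ++ S).length = P.length + S.length + 2 := by simp; omega
  rw [hlw] at hlt hinv hne hcompat hcross
  set k := P.length with hk
  set n := k + S.length with hn
  -- arithmetic helpers
  have hsh_lt : ∀ v, v < n → ins_sh k v < n + 2 := by
    intro v hv; unfold ins_sh; split_ifs <;> omega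
  have hsh_ne : ∀ v, ins_sh k v ≠ k ∧ ins_sh k v ≠ k + 1 := by
    intro v; unfold ins_sh; constructor <;> (split_ifs <;> omega)
  have hun_lt : ∀ o, o < n + 2 → o ≠ k → o ≠ k+1 → ins_un k o < n := by
    intro o h1 h2 h3; unfold ins_un; split_ifs <;> omega
  have hun_sh : ∀ v, ins_un k (ins_sh k v) = v := by
    intro v; unfold ins_un ins_sh; split_ifs <;> omega
  have hsh_un : ∀ o, o ≠ k → o ≠ k+1 → ins_sh k (ins_un k o) = o := by
    intro o h1 h2; unfold ins_un ins_sh; split_ifs <;> omega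
  have hGk : ins_G k F k = k + 1 := by simp [ins_G]
  have hGk1 : ins_G k F (k+1) = k := by simp [ins_G]
  have hGe : ∀ o, o ≠ k → o ≠ k+1 → ins_G k F o = ins_sh k (F (ins_un k o)) := by
    intro o h1 h2; simp [ins_G, h1, h2]
  -- letter transfer for positions avoiding k, k+1
  have hlet : ∀ o, o ≠ k → o ≠ k+1 → wAt (P ++ [c, bar c] ++ S) o = wAt (P ++ S) (ins_un k o) := by
    intro o h1 h2
    unfold ins_un
    split_ifs with h3
    · exact wAt_mid_lo P S c (bar c) h3
    · exact wAt_mid_hi P S c (bar c) (by omega)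
  refine ⟨ins_G k F, ?_, ?_, ?_, ?_, ?_⟩
  · intro o ho; rw [hlw'] at ho; rw [hlw']
    rcases eq_or_ne o k with rfl | h1
    · rw [hGk]; omega
    rcases eq_or_ne o (k+1) with rfl | h2
    · rw [hGk1]; omega
    · rw [hGe o h1 h2]; exact hsh_lt _ (hlt _ (hun_lt o ho h1 h2))
  · intro o ho; rw [hlw'] at ho
    rcases eq_or_ne o k with rfl | h1
    · rw [hGk, hGk1]
    rcases eq_or_ne o (k+1) with rfl | h2
    · rw [hGk1, hGk]
    · rw [hGe o h1 h2]
      have hun := hun_lt o ho h1 h2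
      have hF := hlt _ hun
      rw [hGe _ (hsh_ne _).1 (hsh_ne _).2, hun_sh, hinv _ hun, hsh_un o h1 h2]
  · intro o ho; rw [hlw'] at ho
    rcases eq_or_ne o k with rfl | h1
    · rw [hGk]; omega
    rcases eq_or_ne o (k+1) with rfl | h2
    · rw [hGk1]; omega
    · rw [hGe o h1 h2]
      have hun := hun_lt o ho h1 h2
      have hF := hne _ hun
      unfold ins_sh ins_un at *
      split_ifs at * <;> omega
  · intro o ho; rw [hlw'] at ho
    rcases eq_or_ne o k with rfl | h1
    · rw [hGk, wAt_mid_k1, hk, wAt_mid_k]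
    rcases eq_or_ne o (k+1) with rfl | h2
    · rw [hGk1, wAt_mid_k1, hk, wAt_mid_k, bar_bar]
    · rw [hGe o h1 h2, hlet _ (hsh_ne _).1 (hsh_ne _).2, hlet o h1 h2, hun_sh]
      exact hcompat _ (hun_lt o ho h1 h2)
  · intro i j i' j' hj' h1 h2 h3 e1 e2
    rw [hlw'] at hj'
    rcases eq_or_ne i k with rfl | hi1
    · rw [hGk] at e1; omega
    rcases eq_or_ne i (k+1) with rfl | hi2
    · rw [hGk1] at e1; omega
    rcases eq_or_ne j k with rfl | hj1
    · rw [hGk] at e2; omega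
    rcases eq_or_ne j (k+1) with rfl | hj2
    · rw [hGk1] at e2; omega
    have hiu := hun_lt i (by omega) hi1 hi2
    have hju := hun_lt j (by omega) hj1 hj2
    rw [hGe i hi1 hi2] at e1
    rw [hGe j hj1 hj2] at e2
    have hi'1 : i' ≠ k := e1 ▸ (hsh_ne _).1
    have hi'2 : i' ≠ k+1 := e1 ▸ (hsh_ne _).2
    have hj'1 : j' ≠ k := e2 ▸ (hsh_ne _).1
    have hj'2 : j' ≠ k+1 := e2 ▸ (hsh_ne _).2
    have e1' : F (ins_un k i) = ins_un k i' := by rw [← e1, hun_sh]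
    have e2' : F (ins_un k j) = ins_un k j' := by rw [← e2, hun_sh]
    have hmono : ∀ x y, x < y → x ≠ k → x ≠ k+1 → y ≠ k → y ≠ k+1 →
        ins_un k x < ins_un k y := by
      intro x y hxy hx1 hx2 hy1 hy2; unfold ins_un; split_ifs <;> omega
    rw [hlet i hi1 hi2, hlet j hj1 hj2, hlet i' hi'1 hi'2, hlet j' hj'1 hj'2]
    exact hcross _ _ _ _ (hun_lt j' (by omega) hj'1 hj'2)
      (hmono _ _ h1 hi1 hi2 hj1 hj2) (hmono _ _ h2 hj1 hj2 hi'1 hi'2)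
      (hmono _ _ h3 hi'1 hi'2 hj'1 hj'2) e1' e2'

def sw_t (k o : ℕ) : ℕ := if o = k then k+1 else if o = k+1 then k else o
def sw_G (k : ℕ) (F : ℕ → ℕ) (o : ℕ) : ℕ := sw_t k (F (sw_t k o))

lemma good_swap (P S : List L) (c d : L) (h4 : Rot4 c d (bar c) (bar d))
    (h : GoodWord (P ++ [d, c] ++ S)) : GoodWord (P ++ [c, d] ++ S) := by
  rw [goodword_iff] at h ⊢
  obtain ⟨F, hlt, hinv, hne, hcompat, hcross⟩ := h
  have hlw : (P ++ [d, c] ++ S).length = P.length + S.length + 2 := by simp; omega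
  have hlw' : (P ++ [c, d] ++ S).length = P.length + S.length + 2 := by simp; omega
  rw [hlw] at hlt hinv hne hcompat hcross
  set k := P.length with hk
  set n := k + S.length + 2 with hn
  have hkn : k + 1 < n := by omega
  have ht_lt : ∀ o, o < n → sw_t k o < n := by
    intro o ho; unfold sw_t; split_ifs <;> omega
  have ht_t : ∀ o, sw_t k (sw_t k o) = o := by
    intro o; unfold sw_t; split_ifs <;> omega
  -- letters
  have hWk : wAt (P ++ [c, d] ++ S) k = c := by rw [hk]; exact wAt_mid_k P S c d
  have hWk1 : wAt (P ++ [c, d] ++ S) (k+1) = d := by rw [hk]; exact wAt_mid_k1 P S c d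
  have hVk : wAt (P ++ [d, c] ++ S) k = d := by rw [hk]; exact wAt_mid_k P S d c
  have hVk1 : wAt (P ++ [d, c] ++ S) (k+1) = c := by rw [hk]; exact wAt_mid_k1 P S d c
  have hsame : ∀ o, o ≠ k → o ≠ k + 1 → wAt (P ++ [c, d] ++ S) o = wAt (P ++ [d, c] ++ S) o := by
    intro o h1 h2
    rcases Nat.lt_or_ge o k with h3 | h3
    · rw [wAt_mid_lo P S c d (by omega), wAt_mid_lo P S d c (by omega)]
    · rw [wAt_mid_hi P S c d (by omega), wAt_mid_hi P S d c (by omega)]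
  have hlet : ∀ o, wAt (P ++ [c, d] ++ S) o = wAt (P ++ [d, c] ++ S) (sw_t k o) := by
    intro o
    unfold sw_t
    split_ifs with h1 h2
    · rw [h1, hWk, hVk1]
    · rw [h2, hWk1, hVk]
    · exact hsame o h1 h2
  -- compat, proven first since used in cross
  have hGcompat : ∀ o, o < n →
      wAt (P ++ [c, d] ++ S) (sw_G k F o) = bar (wAt (P ++ [c, d] ++ S) o) := by
    intro o ho
    rw [hlet, hlet o]
    unfold sw_G
    rw [ht_t]
    exact hcompat _ (ht_lt o ho)
  refine ⟨sw_G k F, ?_, ?_, ?_, ?_, ?_⟩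
  · intro o ho; rw [hlw'] at ho; rw [hlw']
    exact ht_lt _ (hlt _ (ht_lt o ho))
  · intro o ho; rw [hlw'] at ho
    unfold sw_G
    rw [ht_t, hinv _ (ht_lt o ho), ht_t]
  · intro o ho; rw [hlw'] at ho
    intro hcon
    have : F (sw_t k o) = sw_t k o := by
      have := congrArg (sw_t k) hcon
      unfold sw_G at this
      rwa [ht_t] at this
    exact hne _ (ht_lt o ho) this
  · intro o ho; rw [hlw'] at ho; exact hGcompat o ho
  · intro i j i' j' hj' h1 h2 h3 e1 e2
    rw [hlw'] at hj'
    by_cases hboth : (i = k ∨ j = k ∨ i' = k ∨ j' = k) ∧ (i = k+1 ∨ j = k+1 ∨ i' = k+1 ∨ j' = k+1)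
    · -- both k and k+1 occur among the four positions
      have hcase : (i = k ∧ j = k+1) ∨ (j = k ∧ i' = k+1) ∨ (i' = k ∧ j' = k+1) := by omega
      have hci : wAt (P ++ [c, d] ++ S) i' = bar (wAt (P ++ [c, d] ++ S) i) := by
        rw [← e1]; exact hGcompat i (by omega)
      have hcj : wAt (P ++ [c, d] ++ S) j' = bar (wAt (P ++ [c, d] ++ S) j) := by
        rw [← e2]; exact hGcompat j (by omega)
      rcases hcase with ⟨rfl, rfl⟩ | ⟨rfl, rfl⟩ | ⟨rfl, rfl⟩
      · rw [hWk] at hci ⊢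
        rw [hWk1] at hcj ⊢
        rw [hci, hcj]; exact h4
      · rw [hWk] at hcj ⊢
        rw [hWk1] at hci ⊢
        have : wAt (P ++ [c, d] ++ S) i = bar d := by rw [← bar_bar (wAt (P ++ [c,d] ++ S) i), ← hci]
        rw [this, hcj]
        exact rot4_rot (rot4_rot (rot4_rot h4))
      · rw [hWk, hWk1]
        rw [hWk] at hci; rw [hWk1] at hcj
        have hi0 : wAt (P ++ [c, d] ++ S) i = bar c := by rw [← bar_bar (wAt (P ++ [c,d] ++ S) i), ← hci]
        have hj0 : wAt (P ++ [c, d] ++ S) j = bar d := by rw [← bar_bar (wAt (P ++ [c,d] ++ S) j), ← hcj]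
        rw [hi0, hj0]
        exact rot4_rot (rot4_rot h4)
    · -- at most one of k, k+1 occurs: sw_t is monotone on the four positions
      have hmono1 : ∀ x y, x < y → x ≠ k → y ≠ k → sw_t k x < sw_t k y := by
        intro x y hxy hx hy; unfold sw_t; split_ifs <;> omega
      have hmono2 : ∀ x y, x < y → x ≠ k+1 → y ≠ k+1 → sw_t k x < sw_t k y := by
        intro x y hxy hx hy; unfold sw_t; split_ifs <;> omega
      have hnk : (i ≠ k ∧ j ≠ k ∧ i' ≠ k ∧ j' ≠ k) ∨ (i ≠ k+1 ∧ j ≠ k+1 ∧ i' ≠ k+1 ∧ j' ≠ k+1) := by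
        tauto
      have e1' : F (sw_t k i) = sw_t k i' := by
        have := congrArg (sw_t k) e1; unfold sw_G at this; rwa [ht_t] at this
      have e2' : F (sw_t k j) = sw_t k j' := by
        have := congrArg (sw_t k) e2; unfold sw_G at this; rwa [ht_t] at this
      rw [hlet i, hlet j, hlet i', hlet j']
      rcases hnk with ⟨q1,q2,q3,q4⟩ | ⟨q1,q2,q3,q4⟩
      · exact hcross _ _ _ _ (ht_lt j' hj') (hmono1 _ _ h1 q1 q2)
          (hmono1 _ _ h2 q2 q3) (hmono1 _ _ h3 q3 q4) e1' e2'
      · exact hcross _ _ _ _ (ht_lt j' hj') (hmono2 _ _ h1 q1 q2)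
          (hmono2 _ _ h2 q2 q3) (hmono2 _ _ h3 q3 q4) e1' e2'

def rt_e (m o : ℕ) : ℕ := if o = m then 0 else o + 1
def rt_ei (m o : ℕ) : ℕ := if o = 0 then m else o - 1
def rt_G (m : ℕ) (F : ℕ → ℕ) (o : ℕ) : ℕ := rt_ei m (F (rt_e m o))

lemma good_rot1 (cc : L) (t : List L) (h : GoodWord (cc :: t)) : GoodWord (t ++ [cc]) := by
  rw [goodword_iff] at h ⊢
  obtain ⟨F, hlt, hinv, hne, hcompat, hcross⟩ := h
  set m := t.length with hm
  have hlw : (cc :: t).length = m + 1 := by simp [hm]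
  have hlw' : (t ++ [cc]).length = m + 1 := by simp [hm]
  rw [hlw] at hlt hinv hne hcompat hcross
  have he_lt : ∀ o, o < m + 1 → rt_e m o < m + 1 := by
    intro o ho; unfold rt_e; split_ifs <;> omega
  have hei_lt : ∀ o, o < m + 1 → rt_ei m o < m + 1 := by
    intro o ho; unfold rt_ei; split_ifs <;> omega
  have hei_e : ∀ o, o < m + 1 → rt_ei m (rt_e m o) = o := by
    intro o ho; unfold rt_e rt_ei; split_ifs <;> first | omega | simp_all
  have he_ei : ∀ o, o < m + 1 → rt_e m (rt_ei m o) = o := by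
    intro o ho; unfold rt_e rt_ei; split_ifs <;> first | omega | simp_all
  have hlet : ∀ o, o < m + 1 → wAt (t ++ [cc]) o = wAt (cc :: t) (rt_e m o) := by
    intro o ho
    rcases eq_or_ne o m with rfl | hom
    · have hL : wAt (t ++ [cc]) m = cc := by
        rw [wAt_append, if_neg (by omega), wAt_cons, if_pos (by omega)]
      have hR : wAt (cc :: t) (rt_e m m) = cc := by
        unfold rt_e; rw [if_pos rfl, wAt_cons, if_pos rfl]
      rw [hL, hR]
    · have hE : rt_e m o = o + 1 := by unfold rt_e; split_ifs <;> omega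
      rw [hE, wAt_append, if_pos (by omega), wAt_cons, if_neg (by omega)]
      simp
  have hGc : ∀ o, o < m + 1 → wAt (t ++ [cc]) (rt_G m F o) = bar (wAt (t ++ [cc]) o) := by
    intro o ho
    have h1 : F (rt_e m o) < m + 1 := hlt _ (he_lt o ho)
    unfold rt_G
    rw [hlet _ ho, hlet _ (hei_lt _ h1), he_ei _ h1]
    exact hcompat _ (he_lt o ho)
  refine ⟨rt_G m F, ?_, ?_, ?_, ?_, ?_⟩
  · intro o ho; rw [hlw'] at ho; rw [hlw']
    exact hei_lt _ (hlt _ (he_lt o ho))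
  · intro o ho; rw [hlw'] at ho
    have h1 : F (rt_e m o) < m + 1 := hlt _ (he_lt o ho)
    unfold rt_G
    rw [he_ei _ h1, hinv _ (he_lt o ho), hei_e _ ho]
  · intro o ho; rw [hlw'] at ho
    intro hcon
    have h1 : F (rt_e m o) < m + 1 := hlt _ (he_lt o ho)
    have := congrArg (rt_e m) hcon
    unfold rt_G at this
    rw [he_ei _ h1] at this
    exact hne _ (he_lt o ho) this
  · intro o ho; rw [hlw'] at ho; exact hGc o ho
  · intro i j i' j' hj' h1 h2 h3 e1 e2
    rw [hlw'] at hj'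
    have hiz : i < m := by omega
    have hjz : j < m := by omega
    have hi'z : i' < m := by omega
    have e1' : F (i + 1) = rt_e m i' := by
      have := congrArg (rt_e m) e1
      unfold rt_G at this
      rw [he_ei _ (hlt _ (he_lt i (by omega)))] at this
      rw [← this]
      congr 1
      unfold rt_e; split_ifs <;> omega
    have e2' : F (j + 1) = rt_e m j' := by
      have := congrArg (rt_e m) e2
      unfold rt_G at this
      rw [he_ei _ (hlt _ (he_lt j (by omega)))] at this
      rw [← this]
      congr 1
      unfold rt_e; split_ifs <;> omega
    rcases eq_or_ne j' m with rfl | hj'm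
    · -- wrap-around case
      have hFj : F (j + 1) = 0 := by rw [e2']; unfold rt_e; simp
      have hF0 : F 0 = j + 1 := by rw [← hFj, hinv _ (by omega)]
      have e1'' : F (i + 1) = i' + 1 := by rw [e1']; unfold rt_e; split_ifs <;> omega
      have hR := hcross 0 (i+1) (j+1) (i'+1) (by omega) (by omega) (by omega) (by omega) hF0 e1''
      rw [hlet i (by omega), hlet j (by omega), hlet i' (by omega), hlet m (by omega)]
      have hei : rt_e m i = i + 1 := by unfold rt_e; split_ifs <;> omega
      have hej : rt_e m j = j + 1 := by unfold rt_e; split_ifs <;> omega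
      have hei' : rt_e m i' = i' + 1 := by unfold rt_e; split_ifs <;> omega
      have hem : rt_e m m = 0 := by unfold rt_e; simp
      rw [hei, hej, hei', hem]
      exact rot4_rot hR
    · have e1'' : F (i + 1) = i' + 1 := by rw [e1']; unfold rt_e; split_ifs <;> omega
      have e2'' : F (j + 1) = j' + 1 := by rw [e2']; unfold rt_e; split_ifs <;> omega
      have hR := hcross (i+1) (j+1) (i'+1) (j'+1) (by omega) (by omega) (by omega) (by omega) e1'' e2''
      rw [hlet i (by omega), hlet j (by omega), hlet i' (by omega), hlet j' (by omega)]
      have hei : rt_e m i = i + 1 := by unfold rt_e; split_ifs <;> omega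
      have hej : rt_e m j = j + 1 := by unfold rt_e; split_ifs <;> omega
      have hei' : rt_e m i' = i' + 1 := by unfold rt_e; split_ifs <;> omega
      have hej' : rt_e m j' = j' + 1 := by unfold rt_e; split_ifs <;> omega
      rw [hei, hej, hei', hej']
      exact hR

lemma good_rot (A B : List L) (h : GoodWord (A ++ B)) : GoodWord (B ++ A) := by
  induction A generalizing B with
  | nil => simpa using h
  | cons cc A ih =>
    have h1 : GoodWord ((A ++ B) ++ [cc]) := good_rot1 cc (A ++ B) (by simpa using h)
    have h2 : GoodWord (A ++ (B ++ [cc])) := by simpa [List.append_assoc] using h1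
    have h3 := ih (B ++ [cc]) h2
    simpa [List.append_assoc] using h3

def apF (n o : ℕ) : ℕ := 2 * n - 1 - o

lemma good_antipal (v : List L) : GoodWord (v.reverse ++ barw v) := by
  rw [goodword_iff]
  set n := v.length with hn
  have hlw : (v.reverse ++ barw v).length = 2 * n := by
    simp [length_barw]; omega
  have hlet1 : ∀ o, o < n → wAt (v.reverse ++ barw v) o = wAt v (n - 1 - o) := by
    intro o ho
    have h1 : o < v.reverse.length := by simp; omega
    rw [wAt_append, if_pos h1, wAt_reverse (show o < v.length by omega)]
  have hlet2 : ∀ o, n ≤ o → o < 2 * n → wAt (v.reverse ++ barw v) o = bar (wAt v (o - n)) := by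
    intro o h1 h2
    have h3 : ¬ o < v.reverse.length := by simp; omega
    rw [wAt_append, if_neg h3]
    have h4 : o - v.reverse.length = o - n := by simp [hn]
    rw [h4]
    exact wAt_barw (show o - n < v.length by omega)
  refine ⟨apF n, ?_, ?_, ?_, ?_, ?_⟩
  · intro o ho; rw [hlw] at ho ⊢; unfold apF; omega
  · intro o ho; rw [hlw] at ho; unfold apF; omega
  · intro o ho; rw [hlw] at ho; unfold apF; omega
  · intro o ho; rw [hlw] at ho
    unfold apF
    rcases Nat.lt_or_ge o n with h1 | h1
    · rw [hlet1 o h1, hlet2 (2*n-1-o) (by omega) (by omega)]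
      congr 2
      omega
    · rw [hlet2 o h1 (by omega), hlet1 (2*n-1-o) (by omega), bar_bar]
      congr 1
      omega
  · intro i j i' j' hj' h1 h2 h3 e1 e2
    unfold apF at e1 e2
    exfalso
    rw [hlw] at hj'
    omega

lemma rule_bar {x y : List L} (h : Rule x y) : Rule (barw x) (barw y) := by
  rcases h with ⟨rfl,rfl⟩|⟨rfl,rfl⟩|⟨rfl,rfl⟩|⟨rfl,rfl⟩|⟨rfl,rfl⟩|⟨rfl,rfl⟩|⟨rfl,rfl⟩|⟨rfl,rfl⟩ <;>
    simp [Rule, barw, bar]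

lemma ruleR {x y : List L} (h : Rule x y) (P S : List L)
    (hg : GoodWord (P ++ y ++ S)) : GoodWord (P ++ x ++ S) := by
  rcases h with ⟨rfl,rfl⟩|⟨rfl,rfl⟩|⟨rfl,rfl⟩|⟨rfl,rfl⟩|⟨rfl,rfl⟩|⟨rfl,rfl⟩|⟨rfl,rfl⟩|⟨rfl,rfl⟩
  · exact good_swap P S _ _ (by simp [Rot4, bar]) hg
  · exact good_swap P S _ _ (by simp [Rot4, bar]) hg
  · exact good_swap P S _ _ (by simp [Rot4, bar]) hg
  · exact good_swap P S _ _ (by simp [Rot4, bar]) hg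
  · have h0 : GoodWord (P ++ S) := by simpa using hg
    simpa [bar] using good_insert P S L.a h0
  · have h0 : GoodWord (P ++ S) := by simpa using hg
    simpa [bar] using good_insert P S L.A h0
  · have h0 : GoodWord (P ++ S) := by simpa using hg
    simpa [bar] using good_insert P S L.b h0
  · have h0 : GoodWord (P ++ S) := by simpa using hg
    simpa [bar] using good_insert P S L.B h0

lemma step_good {u u' : List L} (h : Step u u') (S : List L)
    (hg : GoodWord (u' ++ S)) : GoodWord (u ++ S) := by
  obtain ⟨p, s, x, y, hr, rfl, rfl⟩ := h
  have h1 := ruleR hr p (s ++ S) (by simpa [List.append_assoc] using hg)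
  simpa [List.append_assoc] using h1

lemma good_of_steps_rev (v : List L) (h : Steps v v.reverse) : GoodWord (v ++ barw v) := by
  have h' : Relation.ReflTransGen Step v v.reverse := h
  refine Relation.ReflTransGen.head_induction_on
    (motive := fun a _ => GoodWord (a ++ barw v)) h' (good_antipal v) ?_
  intro a c hac _ ih
  exact step_good hac (barw v) ih


/-- Lemma 2: if `u ⇒* v` and `v →* v^R`, then the circular word `u·ū` admits a matching
satisfying the crossing condition. -/
theorem subrosa_lemma2 (u v : List L) (h1 : FSteps u v) (h2 : Steps v v.reverse) :
    GoodWord (u ++ barw u) := by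
  have base : GoodWord (v ++ barw v) := good_of_steps_rev v h2
  have h1' : Relation.ReflTransGen FStep u v := h1
  refine Relation.ReflTransGen.head_induction_on
    (motive := fun a _ => GoodWord (a ++ barw a)) h1' base ?_
  intro a c hac _ ih
  rcases hac with hstep | ⟨x, y, rfl, rfl⟩
  · obtain ⟨p, s, xx, yy, hr, rfl, rfl⟩ := hstep
    have e1 : GoodWord (p ++ yy ++ (s ++ (barw p ++ (barw yy ++ barw s)))) := by
      simpa [barw_append, List.append_assoc] using ih
    have e2 := ruleR hr p (s ++ (barw p ++ (barw yy ++ barw s))) e1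
    have e3 : GoodWord ((p ++ xx ++ s ++ barw p) ++ barw yy ++ barw s) := by
      simpa [List.append_assoc] using e2
    have e4 := ruleR (rule_bar hr) (p ++ xx ++ s ++ barw p) (barw s) e3
    simpa [barw_append, List.append_assoc] using e4
  · have e1 : GoodWord ((y ++ (barw x ++ barw y)) ++ x) := by
      simpa [barw_append, barw_barw, List.append_assoc] using ih
    have e2 := good_rot (y ++ (barw x ++ barw y)) x e1
    simpa [barw_append, List.append_assoc] using e2
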